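/- Let A be an abelian category and H an ICE-closed subcategory of A. Then the class α(H) = {M ∈ H : for every morphism f: N → M with N ∈ H, ker f ∈ H} is a wide subcategory of A, i.e. closed under kernels, cokernels, and extensions. -/

import Mathlib

/-!
Horizontal maps of a pullback square have isomorphic kernels; everything reduces to this.
For `g : N ⟶ coker f` with `f : X ⟶ Y`, the pullback `P` of `g` along `Y ↠ coker f` is an
extension of `N` by `im f ≅ coker (ker f ⟶ X)`, hence lies in `H`, and `ker g ≅ ker (P ⟶ Y)`.
For `g : N ⟶ X₂` with `0 ⟶ X₁ ⟶ X₂ ⟶ X₃ ⟶ 0` exact, `ker (g ≫ (X₂ ⟶ X₃)) ⟶ N` is the pullback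
of `X₁ ⟶ X₂` along `g`, so `ker g` is the kernel of a map from an object of `H` to `X₁`.
-/

open CategoryTheory CategoryTheory.Limits

/-- The class `α(H)` associated to a class of objects `H` of an abelian category. -/
def alphaSet {A : Type*} [Category A] [Abelian A] (H : Set A) : Set A :=
  {M | M ∈ H ∧ ∀ (N : A) (f : N ⟶ M), N ∈ H → kernel f ∈ H}

namespace CategoryTheory

variable {A : Type*} [Category A] [Abelian A]

lemma ShortComplex.Exact.isPullback_lift_kernel_ι {S : ShortComplex A} (hS : S.Exact) [Mono S.f]
    {N : A} (g : N ⟶ S.X₂) :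
    IsPullback (hS.lift (kernel.ι (g ≫ S.g) ≫ g) (by simp)) (kernel.ι (g ≫ S.g)) S.f g :=
  IsPullback.of_isLimit' ⟨by simp⟩ (PullbackCone.IsLimit.mk _
    (fun s => kernel.lift _ s.snd (by rw [← Category.assoc, ← s.condition, Category.assoc,
      S.zero, comp_zero]))
    (fun s => by simp [← cancel_mono S.f, s.condition])
    (fun s => by simp)
    (fun s m _ hm => by simp [← cancel_mono (kernel.ι (g ≫ S.g)), ← hm]))

variable {H : Set A}

lemma kernel_mem_iff_of_isPullback (hiso : ∀ (X Y : A), X ∈ H → (X ≅ Y) → Y ∈ H)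
    {X₁ X₂ X₃ X₄ : A} {t : X₁ ⟶ X₂} {l : X₁ ⟶ X₃} {r : X₂ ⟶ X₄} {b : X₃ ⟶ X₄}
    (sq : IsPullback t l r b) : kernel t ∈ H ↔ kernel b ∈ H :=
  have := isIso_kernel_map_of_isPullback sq
  ⟨fun h => hiso _ _ h (asIso (kernel.map _ _ _ _ sq.w)),
    fun h => hiso _ _ h (asIso (kernel.map _ _ _ _ sq.w)).symm⟩

lemma mem_of_epi_of_kernel_mem
    (hext : ∀ (S : ShortComplex A), S.ShortExact → S.X₁ ∈ H → S.X₃ ∈ H → S.X₂ ∈ H)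
    {X Y : A} (f : X ⟶ Y) [Epi f] (hK : kernel f ∈ H) (hY : Y ∈ H) : X ∈ H :=
  hext (ShortComplex.mk _ _ (kernel.condition f))
    { exact := ShortComplex.exact_of_f_is_kernel _ (kernelIsKernel f) } hK hY

theorem kernel_mem_alphaSet (hiso : ∀ (X Y : A), X ∈ H → (X ≅ Y) → Y ∈ H)
    {X Y : A} (f : X ⟶ Y) (hX : X ∈ alphaSet H) (hY : Y ∈ alphaSet H) :
    kernel f ∈ alphaSet H :=
  ⟨hY.2 X f hX.1, fun N g hN =>
    hiso _ _ (hX.2 N (g ≫ kernel.ι f) hN) (kernelCompMono g (kernel.ι f))⟩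

theorem cokernel_mem_alphaSet (hiso : ∀ (X Y : A), X ∈ H → (X ≅ Y) → Y ∈ H)
    (hcoker : ∀ (X Y : A) (f : X ⟶ Y), X ∈ H → Y ∈ H → cokernel f ∈ H)
    (hext : ∀ (S : ShortComplex A), S.ShortExact → S.X₁ ∈ H → S.X₃ ∈ H → S.X₂ ∈ H)
    {X Y : A} (f : X ⟶ Y) (hX : X ∈ alphaSet H) (hY : Y ∈ alphaSet H) :
    cokernel f ∈ alphaSet H := by
  refine ⟨hcoker X Y f hX.1 hY.1, fun N g hN => ?_⟩
  have himage : kernel (cokernel.π f) ∈ H :=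
    hiso _ _ (hcoker _ _ (kernel.ι f) (hY.2 X f hX.1) hX.1) (Abelian.coimageIsoImage f)
  have sq := IsPullback.of_hasPullback g (cokernel.π f)
  have hP : pullback g (cokernel.π f) ∈ H :=
    mem_of_epi_of_kernel_mem hext (pullback.fst _ _)
      ((kernel_mem_iff_of_isPullback hiso sq).2 himage) hN
  exact (kernel_mem_iff_of_isPullback hiso sq.flip).1 (hY.2 _ _ hP)

theorem mem_alphaSet_of_shortExact (hiso : ∀ (X Y : A), X ∈ H → (X ≅ Y) → Y ∈ H)
    (hext : ∀ (S : ShortComplex A), S.ShortExact → S.X₁ ∈ H → S.X₃ ∈ H → S.X₂ ∈ H)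
    {S : ShortComplex A} (hS : S.ShortExact) (h₁ : S.X₁ ∈ alphaSet H) (h₃ : S.X₃ ∈ alphaSet H) :
    S.X₂ ∈ alphaSet H := by
  refine ⟨hext S hS h₁.1 h₃.1, fun N g hN => ?_⟩
  have := hS.mono_f
  have sq := hS.exact.isPullback_lift_kernel_ι g
  exact (kernel_mem_iff_of_isPullback hiso sq).1 (h₁.2 _ _ (h₃.2 N (g ≫ S.g) hN))

end CategoryTheory

theorem alpha_of_ICE_closed_is_wide_general
    {A : Type*} [Category A] [Abelian A] (H : Set A)
    (hiso : ∀ (X Y : A), X ∈ H → (X ≅ Y) → Y ∈ H)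
    (hcoker : ∀ (X Y : A) (f : X ⟶ Y), X ∈ H → Y ∈ H → cokernel f ∈ H)
    (hext : ∀ (S : ShortComplex A), S.ShortExact → S.X₁ ∈ H → S.X₃ ∈ H → S.X₂ ∈ H) :
    (∀ (X Y : A) (f : X ⟶ Y), X ∈ alphaSet H → Y ∈ alphaSet H → kernel f ∈ alphaSet H) ∧
    (∀ (X Y : A) (f : X ⟶ Y), X ∈ alphaSet H → Y ∈ alphaSet H → cokernel f ∈ alphaSet H) ∧
    (∀ (S : ShortComplex A), S.ShortExact →
      S.X₁ ∈ alphaSet H → S.X₃ ∈ alphaSet H → S.X₂ ∈ alphaSet H) :=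
  ⟨fun _ _ => kernel_mem_alphaSet hiso,
    fun _ _ => cokernel_mem_alphaSet hiso hcoker hext,
    fun _ => mem_alphaSet_of_shortExact hiso hext⟩

theorem alpha_of_ICE_closed_is_wide
    {A : Type*} [Category A] [Abelian A] (H : Set A)
    (hiso : ∀ (X Y : A), X ∈ H → (X ≅ Y) → Y ∈ H)
    (himage : ∀ (X Y : A) (f : X ⟶ Y), X ∈ H → Y ∈ H → image f ∈ H)
    (hcoker : ∀ (X Y : A) (f : X ⟶ Y), X ∈ H → Y ∈ H → cokernel f ∈ H)
    (hext : ∀ (S : ShortComplex A), S.ShortExact → S.X₁ ∈ H → S.X₃ ∈ H → S.X₂ ∈ H) :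
    (∀ (X Y : A) (f : X ⟶ Y), X ∈ alphaSet H → Y ∈ alphaSet H → kernel f ∈ alphaSet H) ∧
    (∀ (X Y : A) (f : X ⟶ Y), X ∈ alphaSet H → Y ∈ alphaSet H → cokernel f ∈ alphaSet H) ∧
    (∀ (S : ShortComplex A), S.ShortExact →
      S.X₁ ∈ alphaSet H → S.X₃ ∈ alphaSet H → S.X₂ ∈ alphaSet H) :=
  alpha_of_ICE_closed_is_wide_general H hiso hcoker hext
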